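/- arXiv:2110.04847 — 3 statements merged into one kernel-verified Lean document; each statement's English description precedes it below -/
import Mathlib

section
/- Let (Ω,𝓕,μ) be a probability space with Ω a standard Borel space, and let W : Ω → ℝ^{d_w}, Y : Ω → ℝ^{d_y}, Z : Ω → ℝ^{d_z} be Borel-measurable random vectors. Then Y and Z are conditionally independent given σ(W) if and only if for every y ∈ ℝ^{d_y} and z ∈ ℝ^{d_z} the factorization F_{Y,Z|W}(y,z|W) = F_{Y|W}(y|W) · F_{Z|W}(z|W) holds μ-almost everywhere. -/
open MeasureTheory ProbabilityTheory

lemma pi_generateFrom_Iic (d : ℕ) :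
    (inferInstance : MeasurableSpace (Fin d → ℝ)) =
      MeasurableSpace.generateFrom
        (Set.range (Set.Iic : (Fin d → ℝ) → Set (Fin d → ℝ))) := by
  have himg : Set.pi Set.univ ''
      Set.pi Set.univ (fun _ : Fin d => Set.range (Set.Iic : ℝ → Set ℝ)) =
      Set.range (Set.Iic : (Fin d → ℝ) → Set (Fin d → ℝ)) := by
    ext s
    constructor
    · rintro ⟨f, hf, rfl⟩
      choose y hy using fun i => hf i (Set.mem_univ i)
      exact ⟨y, by rw [← Set.pi_univ_Iic]; exact (Set.pi_congr rfl fun i _ => hy i)⟩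
    · rintro ⟨y, rfl⟩
      exact ⟨fun i => Set.Iic (y i), fun i _ => ⟨y i, rfl⟩, Set.pi_univ_Iic y⟩
  have hC : ∀ _i : Fin d, MeasurableSpace.generateFrom (Set.range (Set.Iic : ℝ → Set ℝ)) =
      (inferInstance : MeasurableSpace ℝ) := fun _ =>
    (borel_eq_generateFrom_Iic ℝ).symm.trans (BorelSpace.measurable_eq (α := ℝ)).symm
  have hspan : IsCountablySpanning (Set.range (Set.Iic : ℝ → Set ℝ)) :=
    ⟨fun n => Set.Iic (n : ℝ), fun n => ⟨n, rfl⟩, by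
      ext x
      simp only [Set.mem_iUnion, Set.mem_Iic, Set.mem_univ, iff_true]
      exact exists_nat_ge x⟩
  calc (inferInstance : MeasurableSpace (Fin d → ℝ)) = MeasurableSpace.pi := rfl
  _ = _ := by rw [← generateFrom_eq_pi hC (fun _ => hspan), himg]

/-- Conditional independence of `Y` and `Z` given `σ(W)` is equivalent to the
a.e. factorization of the conditional CDFs `F_{Y,Z|W} = F_{Y|W} · F_{Z|W}` for all `y, z`. -/
theorem stmt_0 {Ω : Type*} [mΩ : MeasurableSpace Ω] [StandardBorelSpace Ω]
    (μ : Measure Ω) [IsProbabilityMeasure μ]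
    {dw dy dz : ℕ} (W : Ω → (Fin dw → ℝ)) (Y : Ω → (Fin dy → ℝ)) (Z : Ω → (Fin dz → ℝ))
    (hW : Measurable W) (hY : Measurable Y) (hZ : Measurable Z) :
    CondIndepFun (MeasurableSpace.comap W inferInstance)
        (measurable_iff_comap_le.mp hW) Y Z μ ↔
      ∀ (y : Fin dy → ℝ) (z : Fin dz → ℝ),
        μ[fun ω => Set.indicator {ω' | Y ω' ≤ y} (fun _ => (1 : ℝ)) ω *
              Set.indicator {ω' | Z ω' ≤ z} (fun _ => (1 : ℝ)) ω |
            MeasurableSpace.comap W inferInstance]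
          =ᵐ[μ]
        fun ω =>
          (μ[Set.indicator {ω' | Y ω' ≤ y} (fun _ => (1 : ℝ)) |
              MeasurableSpace.comap W inferInstance]) ω *
          (μ[Set.indicator {ω' | Z ω' ≤ z} (fun _ => (1 : ℝ)) |
              MeasurableSpace.comap W inferInstance]) ω := by
  set m' := MeasurableSpace.comap W (inferInstance : MeasurableSpace (Fin dw → ℝ))
  have hm' : m' ≤ mΩ := measurable_iff_comap_le.mp hW
  have hIicMeas : ∀ {d : ℕ} (y : Fin d → ℝ), MeasurableSet (Set.Iic y) := by
    intro d y
    rw [← Set.pi_univ_Iic]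
    exact MeasurableSet.univ_pi fun i => measurableSet_Iic
  have hpre : ∀ {d : ℕ} (X : Ω → (Fin d → ℝ)) (y : Fin d → ℝ),
      {ω' | X ω' ≤ y} = X ⁻¹' Set.Iic y := fun _ _ => rfl
  have hmul : ∀ (s t : Set Ω),
      (Set.indicator (s ∩ t) (fun _ => (1 : ℝ))) =
        fun ω => Set.indicator s (fun _ => (1 : ℝ)) ω * Set.indicator t (fun _ => (1 : ℝ)) ω := by
    intro s t
    funext ω
    rw [← Set.inter_indicator_mul]
    simp
  have hpisys : ∀ {d : ℕ},
      IsPiSystem (Set.range (Set.Iic : (Fin d → ℝ) → Set (Fin d → ℝ))) := by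
    rintro d _ ⟨a, rfl⟩ _ ⟨b, rfl⟩ -
    exact ⟨a ⊓ b, Set.Iic_inter_Iic.symm⟩
  constructor
  · intro h y z
    have := (condIndepFun_iff_condExp_inter_preimage_eq_mul (hm' := hm') hY hZ).mp h
      (Set.Iic y) (Set.Iic z) (hIicMeas y) (hIicMeas z)
    rw [hpre Y y, hpre Z z, ← hmul]
    exact this
  · intro h
    rw [condIndepFun_iff_condIndep]
    have hgen : ∀ {d : ℕ} (X : Ω → (Fin d → ℝ)),
        MeasurableSpace.comap X inferInstance =
          MeasurableSpace.generateFrom {s | ∃ t ∈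
            Set.range (Set.Iic : (Fin d → ℝ) → Set (Fin d → ℝ)), X ⁻¹' t = s} := by
      intro d X
      conv_lhs => rw [pi_generateFrom_Iic d]
      rw [MeasurableSpace.comap_generateFrom]
      rfl
    refine CondIndepSets.condIndep (hY.comap_le) (hZ.comap_le)
      (IsPiSystem.comap hpisys Y) (IsPiSystem.comap hpisys Z)
      (hgen Y) (hgen Z) ?_
    rw [condIndepSets_iff _ _ _ _ ?_ ?_]
    · rintro _ _ ⟨_, ⟨y, rfl⟩, rfl⟩ ⟨_, ⟨z, rfl⟩, rfl⟩
      have := h y z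
      rw [hpre Y y, hpre Z z, ← hmul] at this
      exact this
    · rintro _ ⟨_, ⟨y, rfl⟩, rfl⟩
      exact hY (hIicMeas y)
    · rintro _ ⟨_, ⟨z, rfl⟩, rfl⟩
      exact hZ (hIicMeas z)
end

section
/- Let (Ω,𝓕,μ) be a probability space, W : Ω → ℝ^{d_w} a Borel-measurable random vector, V : Ω → ℝ an integrable random variable, and g : ℝ^{d_w} → ℝ a bounded Borel-measurable function with g(W) > 0 μ-almost surely. Then E[V | σ(W)] = 0 μ-almost everywhere if and only if E[1(W ≤ w) · g(W) · V] = 0 for every w ∈ ℝ^{d_w}. -/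
open MeasureTheory ProbabilityTheory

/-- Each closed lower half-space in `Fin dw → ℝ` is a countable union of `Iic` boxes. -/
lemma halfspace_eq_iUnion_Iic {dw : ℕ} (i : Fin dw) (c : ℝ) :
    {u : Fin dw → ℝ | u i ≤ c} =
      ⋃ n : ℕ, Set.Iic (fun j => if j = i then c else (n : ℝ)) := by
  ext u
  simp only [Set.mem_setOf_eq, Set.mem_iUnion, Set.mem_Iic]
  constructor
  · intro hu
    obtain ⟨M, hM⟩ := Finite.exists_le u
    obtain ⟨n, hn⟩ := exists_nat_ge M
    refine ⟨n, fun j => ?_⟩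
    by_cases hj : j = i
    · simp [hj, hu]
    · simp only [hj, if_false]
      exact (hM j).trans hn
  · rintro ⟨n, hn⟩
    simpa using hn i

/-- The Borel σ-algebra on `Fin dw → ℝ` is generated by the boxes `Iic w`. -/
lemma pi_eq_generateFrom_Iic (dw : ℕ) :
    (inferInstance : MeasurableSpace (Fin dw → ℝ)) =
      MeasurableSpace.generateFrom
        (Set.range (Set.Iic : (Fin dw → ℝ) → Set (Fin dw → ℝ))) := by
  have hb : (Real.measurableSpace) =
      MeasurableSpace.generateFrom (Set.range (Set.Iic : ℝ → Set ℝ)) :=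
    (BorelSpace.measurable_eq (α := ℝ)).trans (borel_eq_generateFrom_Iic ℝ)
  refine le_antisymm ?_ (MeasurableSpace.generateFrom_le ?_)
  · have hmeas : ∀ i : Fin dw,
        @Measurable (Fin dw → ℝ) ℝ
          (MeasurableSpace.generateFrom
            (Set.range (Set.Iic : (Fin dw → ℝ) → Set (Fin dw → ℝ)))) _
          (fun u => u i) := by
      intro i
      rw [hb]
      refine @measurable_generateFrom _ _
        (MeasurableSpace.generateFrom
          (Set.range (Set.Iic : (Fin dw → ℝ) → Set (Fin dw → ℝ)))) _ _ ?_
      rintro t ⟨c, rfl⟩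
      have hpre : (fun u : Fin dw → ℝ => u i) ⁻¹' Set.Iic c
          = {u : Fin dw → ℝ | u i ≤ c} := rfl
      rw [hpre, halfspace_eq_iUnion_Iic]
      exact MeasurableSet.iUnion fun n =>
        MeasurableSpace.measurableSet_generateFrom ⟨_, rfl⟩
    exact iSup_le fun i => measurable_iff_comap_le.mp (hmeas i)
  · rintro t ⟨w, rfl⟩
    have : Set.Iic w = ⋂ i, (fun u : Fin dw → ℝ => u i) ⁻¹' Set.Iic (w i) := by
      ext u
      simp [Set.mem_Iic, Pi.le_def]
    rw [this]
    exact MeasurableSet.iInter fun i => (measurable_pi_apply i) measurableSet_Iic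

/-- With a bounded measurable weight `g` satisfying `g(W) > 0` a.s.,
`E[V | σ(W)] = 0` a.e. iff `E[1(W ≤ w) · g(W) · V] = 0` for every `w`. -/
theorem stmt_3 {Ω : Type*} [mΩ : MeasurableSpace Ω]
    (μ : Measure Ω) [IsProbabilityMeasure μ]
    {dw : ℕ} (W : Ω → (Fin dw → ℝ)) (V : Ω → ℝ) (g : (Fin dw → ℝ) → ℝ)
    (hW : Measurable W) (hV : Integrable V μ)
    (hg : Measurable g) (hgbdd : ∃ C : ℝ, ∀ u, |g u| ≤ C)
    (hgpos : ∀ᵐ ω ∂μ, 0 < g (W ω)) :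
    (μ[V | MeasurableSpace.comap W inferInstance] =ᵐ[μ] 0) ↔
      ∀ w : Fin dw → ℝ,
        ∫ ω, Set.indicator {ω' | W ω' ≤ w} (fun _ => (1 : ℝ)) ω * g (W ω) * V ω ∂μ = 0 := by
  have hm : MeasurableSpace.comap W inferInstance ≤ mΩ := hW.comap_le
  set h : Ω → ℝ := fun ω => g (W ω) * V ω with hh_def
  have hgW_meas : Measurable[mΩ] (fun ω => g (W ω)) := hg.comp hW
  have hh : Integrable h μ := by
    obtain ⟨C, hC⟩ := hgbdd
    exact hV.bdd_mul hgW_meas.aestronglyMeasurable (c := C)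
      (Filter.Eventually.of_forall fun x => by simpa [Real.norm_eq_abs] using hC (W x))
  -- measurability of the boxes
  have hsmeas : ∀ w : Fin dw → ℝ, MeasurableSet[mΩ] (W ⁻¹' Set.Iic w) :=
    fun w => hW measurableSet_Iic
  -- rewrite the weighted integral as a set integral
  have key : ∀ w : Fin dw → ℝ,
      ∫ ω, Set.indicator {ω' | W ω' ≤ w} (fun _ => (1 : ℝ)) ω * g (W ω) * V ω ∂μ
        = ∫ ω in W ⁻¹' Set.Iic w, h ω ∂μ := by
    intro w
    rw [← integral_indicator (hsmeas w)]
    refine integral_congr_ae (Filter.Eventually.of_forall fun ω => ?_)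
    by_cases hω : W ω ≤ w
    · simp [Set.indicator_apply, Set.mem_setOf_eq, Set.mem_preimage, Set.mem_Iic, hω,
        hh_def, mul_assoc]
    · simp [Set.indicator_apply, Set.mem_setOf_eq, Set.mem_preimage, Set.mem_Iic, hω]
  -- pull-out property
  have hgWm : Measurable[MeasurableSpace.comap W inferInstance] (fun ω => g (W ω)) :=
    fun t ht => ⟨g ⁻¹' t, hg ht, rfl⟩
  have hpull : μ[h|MeasurableSpace.comap W inferInstance] =ᵐ[μ]
      (fun ω => g (W ω)) * μ[V|MeasurableSpace.comap W inferInstance] :=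
    condExp_mul_of_stronglyMeasurable_left hgWm.stronglyMeasurable hh hV
  haveI : SigmaFinite (μ.trim hm) := inferInstance
  constructor
  · -- forward direction
    intro hce w
    have hzero : μ[h|MeasurableSpace.comap W inferInstance] =ᵐ[μ] 0 := by
      refine hpull.trans ?_
      filter_upwards [hce] with ω hω
      simp [hω]
    rw [key w, ← setIntegral_condExp hm hh
      (⟨Set.Iic w, measurableSet_Iic, rfl⟩ :
        MeasurableSet[MeasurableSpace.comap W inferInstance] (W ⁻¹' Set.Iic w))]
    calc ∫ ω in W ⁻¹' Set.Iic w, (μ[h|MeasurableSpace.comap W inferInstance]) ω ∂μ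
        = ∫ ω in W ⁻¹' Set.Iic w, (0 : ℝ) ∂μ :=
          integral_congr_ae (ae_restrict_of_ae (by filter_upwards [hzero] with ω hω using hω))
      _ = 0 := by simp
  · -- reverse direction
    intro hint
    have hint' : ∀ w : Fin dw → ℝ, ∫ ω in W ⁻¹' Set.Iic w, h ω ∂μ = 0 :=
      fun w => (key w) ▸ hint w
    -- total integral is zero
    have hUuniv : (⋃ n : ℕ, W ⁻¹' Set.Iic (fun _ => (n : ℝ))) = Set.univ := by
      ext ω
      simp only [Set.mem_iUnion, Set.mem_preimage, Set.mem_Iic, Set.mem_univ, iff_true]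
      obtain ⟨M, hM⟩ := Finite.exists_le (W ω)
      obtain ⟨n, hn⟩ := exists_nat_ge M
      exact ⟨n, fun j => (hM j).trans hn⟩
    have htotal : ∫ ω, h ω ∂μ = 0 := by
      have hmono : Monotone (fun n : ℕ => W ⁻¹' Set.Iic (fun _ => (n : ℝ))) := by
        intro a b hab
        refine Set.preimage_mono (Set.Iic_subset_Iic.mpr fun j => ?_)
        exact Nat.cast_le.mpr hab
      have hten := tendsto_setIntegral_of_monotone
        (fun n : ℕ => hsmeas (fun _ => (n : ℝ))) hmono
        (by rw [hUuniv]; exact hh.integrableOn)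
      rw [hUuniv, Measure.restrict_univ] at hten
      simp only [hint'] at hten
      exact (tendsto_const_nhds_iff.mp hten).symm
    -- extend from boxes to all Borel sets
    have hB : ∀ ⦃B : Set (Fin dw → ℝ)⦄, MeasurableSet B →
        ∫ ω in W ⁻¹' B, h ω ∂μ = 0 := by
      refine MeasurableSpace.induction_on_inter (pi_eq_generateFrom_Iic dw) ?_ (by simp) ?_ ?_ ?_
      · rintro s ⟨a, rfl⟩ t ⟨b, rfl⟩ -
        rw [Set.Iic_inter_Iic]
        exact ⟨a ⊓ b, rfl⟩
      · rintro t ⟨w, rfl⟩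
        exact hint' w
      · intro t ht hCt
        have hadd := integral_add_compl (hW ht) hh
        have : W ⁻¹' tᶜ = (W ⁻¹' t)ᶜ := rfl
        rw [this]
        linarith [hadd, htotal, hCt]
      · intro f hdis hfm hCf
        have : W ⁻¹' (⋃ i, f i) = ⋃ i, W ⁻¹' (f i) := by simp
        rw [this, integral_iUnion (fun i => hW (hfm i))
          (fun i j hij => (hdis hij).preimage W) hh.integrableOn]
        simp [hCf]
    -- conditional expectation of h vanishes
    have h0 : (fun _ : Ω => (0 : ℝ)) =ᵐ[μ] μ[h|MeasurableSpace.comap W inferInstance] := by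
      refine ae_eq_condExp_of_forall_setIntegral_eq hm hh
        (fun s _ _ => (integrable_const (0 : ℝ)).integrableOn) ?_
        (StronglyMeasurable.aestronglyMeasurable
          (@stronglyMeasurable_zero _ _ (MeasurableSpace.comap W inferInstance) _ _))
      rintro s ⟨B, hBm, rfl⟩ -
      simpa using (hB hBm).symm
    have h0' : μ[h|MeasurableSpace.comap W inferInstance] =ᵐ[μ] 0 := h0.symm
    filter_upwards [h0', hpull, hgpos] with ω h1 h2 h3
    have hmul : g (W ω) * (μ[V|MeasurableSpace.comap W inferInstance]) ω = 0 := by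
      have := h2.symm.trans h1
      simpa using this
    have := (mul_eq_zero.mp hmul).resolve_left (ne_of_gt h3)
    simpa using this
end

section
/- Let d ≥ 1 and l ≥ 1 be natural numbers, let K : ℝ^d → ℝ be integrable with ∫ K(u) du = 1, suppose that for every multi-index β with 1 ≤ |β| ≤ l−1 the function u ↦ u^β K(u) is integrable with ∫ u^β K(u) du = 0, and suppose κ := ∫ ‖u‖^l |K(u)| du < ∞. Let g : ℝ^d → ℝ be l-times continuously differentiable with sup_x ‖D^l g(x)‖ ≤ M, where D^l g denotes the l-th iterated Fréchet derivative. Then for every x ∈ ℝ^d and every h > 0, |∫ K(u) g(x + h·u) du − g(x)| ≤ (M·κ / l!) · h^l. -/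
open MeasureTheory

section aux
variable {E : Type*} [NormedAddCommGroup E] [NormedSpace ℝ E]

lemma auxA {l : ℕ} {g : E → ℝ} (hg : ContDiff ℝ (l : ℕ∞) g) :
    ∀ k : ℕ, k ≤ l → ∀ (y w : E),
      iteratedFDeriv ℝ k (fun z => g (y + z)) w = iteratedFDeriv ℝ k g (y + w) := by
  intro k
  induction k with
  | zero => intro _ y w; ext m; simp
  | succ k IH =>
    intro hk y w
    have hk' : k ≤ l := Nat.le_of_succ_le hk
    rw [iteratedFDeriv_succ_eq_comp_left, iteratedFDeriv_succ_eq_comp_left]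
    have hdiff : DifferentiableAt ℝ (iteratedFDeriv ℝ k g) (y + w) :=
      (hg.differentiable_iteratedFDeriv (by exact_mod_cast hk)) (y + w)
    have h1 : (fun w => iteratedFDeriv ℝ k (fun z => g (y + z)) w)
        = fun w => iteratedFDeriv ℝ k g (y + w) := funext (IH hk' y)
    have h2 : fderiv ℝ (fun w => iteratedFDeriv ℝ k g (y + w)) w
        = fderiv ℝ (iteratedFDeriv ℝ k g) (y + w) := by
      have : HasFDerivAt (fun w => iteratedFDeriv ℝ k g (y + w))
          (fderiv ℝ (iteratedFDeriv ℝ k g) (y + w)) w := by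
        have := hdiff.hasFDerivAt.comp w ((hasFDerivAt_id w).const_add y)
        exact this
      exact this.fderiv
    simp only [Function.comp_apply, h1, h2]

lemma auxB {l : ℕ} {g : E → ℝ} (hg : ContDiff ℝ (l : ℕ∞) g) (v : E)
    {k : ℕ} (hk : k ≤ l) (y : E) (t : ℝ) :
    iteratedDeriv k (fun s : ℝ => g (y + s • v)) t
      = iteratedFDeriv ℝ k g (y + t • v) (fun _ => v) := by
  -- reduce to t = 0
  have hshift := iteratedDeriv_comp_const_add k (fun s : ℝ => g (y + s • v)) t
  have h0 : iteratedDeriv k (fun s : ℝ => g (y + s • v)) t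
      = iteratedDeriv k (fun z : ℝ => g ((y + t • v) + z • v)) 0 := by
    have := congrFun hshift 0
    simp only [add_zero] at this
    rw [← this]
    congr 1
    funext z
    congr 1
    rw [add_smul]; abel
  rw [h0]
  set y' := y + t • v with hy'
  -- now at 0
  let L : ℝ →L[ℝ] E := ContinuousLinearMap.toSpanSingleton ℝ v
  let f : E → ℝ := fun w => g (y' + w)
  have hf : ContDiff ℝ (l : ℕ∞) f := hg.comp (contDiff_const.add contDiff_id)
  have hcomp : (fun z : ℝ => g (y' + z • v)) = f ∘ L := by
    funext z; simp [f, L, ContinuousLinearMap.toSpanSingleton_apply]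
  rw [hcomp, iteratedDeriv_eq_iteratedFDeriv,
    ContinuousLinearMap.iteratedFDeriv_comp_right L hf 0 (by exact_mod_cast hk)]
  simp only [ContinuousMultilinearMap.compContinuousLinearMap_apply, map_zero]
  have hf0 : iteratedFDeriv ℝ k f 0 = iteratedFDeriv ℝ k g y' := by
    simpa using auxA hg k hk y' 0
  rw [hf0]
  congr 1
  funext j
  simp [L, ContinuousLinearMap.toSpanSingleton_apply]

lemma auxC {l : ℕ} {F : ℝ → ℝ} (hF : ContDiff ℝ (l : ℕ∞) F) :
    ∀ k : ℕ, k ≤ l → ∀ t ∈ Set.Icc (0:ℝ) 1,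
      iteratedDerivWithin k F (Set.Icc 0 1) t = iteratedDeriv k F t := by
  intro k
  induction k with
  | zero => intro _ t _; simp
  | succ k IH =>
    intro hk t ht
    have hk' : k ≤ l := Nat.le_of_succ_le hk
    have hu : UniqueDiffWithinAt ℝ (Set.Icc (0:ℝ) 1) t := (uniqueDiffOn_Icc one_pos) t ht
    rw [iteratedDerivWithin_succ]
    have h1 : derivWithin (iteratedDerivWithin k F (Set.Icc 0 1)) (Set.Icc 0 1) t
        = derivWithin (iteratedDeriv k F) (Set.Icc 0 1) t :=
      derivWithin_congr (fun y hy => IH hk' y hy) (IH hk' t ht)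
    have hdiff : DifferentiableAt ℝ (iteratedDeriv k F) t :=
      (hF.differentiable_iteratedDeriv k (by exact_mod_cast hk)) t
    rw [h1, hdiff.derivWithin hu, ← iteratedDeriv_succ]
end aux

section aux2
variable {E : Type*} [NormedAddCommGroup E] [NormedSpace ℝ E]

lemma auxD {l : ℕ} (hl : 1 ≤ l) {g : E → ℝ} {M : ℝ} (hg : ContDiff ℝ (l : ℕ∞) g)
    (hgM : ∀ x, ‖iteratedFDeriv ℝ l g x‖ ≤ M) (x v : E) :
    |g (x + v) - ∑ k ∈ Finset.range l,
        ((k.factorial : ℝ))⁻¹ * iteratedFDeriv ℝ k g x (fun _ => v)|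
      ≤ M * ‖v‖ ^ l / (l.factorial) := by
  obtain ⟨n, rfl⟩ : ∃ n, l = n + 1 := ⟨l - 1, (Nat.succ_pred_eq_of_pos hl).symm⟩
  set φ : ℝ → ℝ := fun t => g (x + t • v) with hφ
  have hφc : ContDiff ℝ ((n+1 : ℕ) : ℕ∞) φ :=
    hg.comp (contDiff_const.add (contDiff_id.smul contDiff_const))
  have hWithin : ∀ k : ℕ, k ≤ n + 1 → ∀ t ∈ Set.Icc (0:ℝ) 1,
      iteratedDerivWithin k φ (Set.Icc 0 1) t
        = iteratedFDeriv ℝ k g (x + t • v) (fun _ => v) := by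
    intro k hk t ht
    rw [auxC hφc k hk t ht, auxB hg v hk x t]
  have hf : ContDiffOn ℝ n φ (Set.Icc 0 1) :=
    (hφc.of_le (by exact_mod_cast Nat.le_succ n)).contDiffOn
  have hf' : DifferentiableOn ℝ (iteratedDerivWithin n φ (Set.Icc 0 1)) (Set.Ioo 0 1) := by
    intro t ht'
    have ht : t ∈ Set.Icc (0:ℝ) 1 := Set.Ioo_subset_Icc_self ht'
    have hdiff : DifferentiableAt ℝ (iteratedDeriv n φ) t :=
      (hφc.differentiable_iteratedDeriv n (by exact_mod_cast Nat.lt_succ_self n)) t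
    exact hdiff.differentiableWithinAt.congr
      (fun y hy => auxC hφc n (Nat.le_succ n) y hy) (auxC hφc n (Nat.le_succ n) t ht)
      |>.mono Set.Ioo_subset_Icc_self
  obtain ⟨t', ht', heq⟩ := taylor_mean_remainder_lagrange (f := φ) (x₀ := 0) (x := 1) (n := n)
    zero_ne_one (by rwa [Set.uIcc_of_le zero_le_one])
    (by rwa [Set.uIcc_of_le zero_le_one, Set.uIoo_of_le zero_le_one])
  simp only [Set.uIcc_of_le zero_le_one, Set.uIoo_of_le zero_le_one] at ht' heq
  have hIcc : t' ∈ Set.Icc (0:ℝ) 1 := ⟨ht'.1.le, ht'.2.le⟩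
  have htay : taylorWithinEval φ n (Set.Icc 0 1) 0 1
      = ∑ k ∈ Finset.range (n+1),
          ((k.factorial : ℝ))⁻¹ * iteratedFDeriv ℝ k g x (fun _ => v) := by
    rw [taylor_within_apply]
    refine Finset.sum_congr rfl fun k hk => ?_
    rw [hWithin k (Nat.le_of_lt (Finset.mem_range.mp hk)) 0
      (Set.left_mem_Icc.mpr zero_le_one)]
    simp [smul_eq_mul]
  have hφ1 : φ 1 = g (x + v) := by simp [hφ]
  rw [← hφ1, ← htay, heq]
  rw [hWithin (n+1) le_rfl t' hIcc]
  have hM0 : 0 ≤ M := le_trans (norm_nonneg _) (hgM x)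
  have hbound : |iteratedFDeriv ℝ (n+1) g (x + t' • v) (fun _ => v)|
      ≤ M * ‖v‖ ^ (n+1) := by
    calc |iteratedFDeriv ℝ (n+1) g (x + t' • v) (fun _ => v)|
        ≤ ‖iteratedFDeriv ℝ (n+1) g (x + t' • v)‖ * ∏ _i : Fin (n+1), ‖v‖ :=
          (iteratedFDeriv ℝ (n+1) g (x + t' • v)).le_opNorm _
      _ ≤ M * ‖v‖ ^ (n+1) := by
          rw [Finset.prod_const, Finset.card_univ, Fintype.card_fin]
          exact mul_le_mul_of_nonneg_right (hgM _) (by positivity)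
  rw [abs_div, abs_mul]
  simp only [sub_zero, one_pow, abs_one, mul_one, Nat.abs_cast]
  gcongr
end aux2


lemma auxE {d k : ℕ} (u : Fin d → ℝ) (f : Fin k → Fin d) :
    ∏ j, u (f j) = ∏ i, u i ^ (Finset.univ.filter (fun j => f j = i)).card := by
  rw [← Finset.prod_fiberwise_of_maps_to (fun j _ => Finset.mem_univ (f j)) (fun j => u (f j))]
  refine Finset.prod_congr rfl fun i _ => ?_
  rw [Finset.prod_congr rfl (fun j hj => by rw [(Finset.mem_filter.mp hj).2]),
    Finset.prod_const]

lemma auxEcard {d k : ℕ} (f : Fin k → Fin d) :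
    ∑ i, (Finset.univ.filter (fun j => f j = i)).card = k := by
  rw [← Finset.card_eq_sum_card_fiberwise (fun j _ => Finset.mem_univ (f j))]
  simp

/-- Higher-order-kernel bias bound: if `K` integrates to one, annihilates all
monomials of total degree `1 ≤ |β| ≤ l−1`, and has finite `l`-th absolute moment `κ`, and `g`
is `l`-times continuously differentiable with `‖D^l g‖ ≤ M` everywhere, then
`|∫ K(u) g(x + h·u) du − g(x)| ≤ (M κ / l!) h^l`. -/
theorem stmt_18 (d l : ℕ) (hd : 1 ≤ d) (hl : 1 ≤ l)
    (K : EuclideanSpace ℝ (Fin d) → ℝ)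
    (hKint : Integrable K volume) (hK1 : ∫ u, K u = 1)
    (hKmom : ∀ β : Fin d → ℕ, 1 ≤ ∑ i, β i → ∑ i, β i ≤ l - 1 →
      Integrable (fun u : EuclideanSpace ℝ (Fin d) => (∏ i, u i ^ β i) * K u) volume ∧
        ∫ u : EuclideanSpace ℝ (Fin d), (∏ i, u i ^ β i) * K u = 0)
    (hκ : Integrable (fun u : EuclideanSpace ℝ (Fin d) => ‖u‖ ^ l * |K u|) volume)
    (g : EuclideanSpace ℝ (Fin d) → ℝ) (M : ℝ)
    (hg : ContDiff ℝ (l : ℕ∞) g)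
    (hgM : ∀ x, ‖iteratedFDeriv ℝ l g x‖ ≤ M) :
    ∀ (x : EuclideanSpace ℝ (Fin d)) (h : ℝ), 0 < h →
      |(∫ u, K u * g (x + h • u)) - g x| ≤
        (M * (∫ u : EuclideanSpace ℝ (Fin d), ‖u‖ ^ l * |K u|) / (Nat.factorial l)) *
          h ^ l := by
  intro x h hpos
  have hM0 : 0 ≤ M := le_trans (norm_nonneg _) (hgM x)
  set e : Fin d → EuclideanSpace ℝ (Fin d) := fun i => EuclideanSpace.single i 1 with he
  -- decomposition of a vector in the standard basis
  have hdecomp : ∀ w : EuclideanSpace ℝ (Fin d), w = ∑ i, w i • e i := by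
    intro w
    ext j
    rw [WithLp.ofLp_sum, Finset.sum_apply]
    simp [he, EuclideanSpace.single_apply]
  -- expansion of the iterated derivative applied to (h•u, ..., h•u)
  have hexp : ∀ (k : ℕ) (u : EuclideanSpace ℝ (Fin d)),
      iteratedFDeriv ℝ k g x (fun _ => h • u)
        = ∑ f : Fin k → Fin d,
            (h ^ k * ∏ j, u (f j)) * iteratedFDeriv ℝ k g x (fun j => e (f j)) := by
    intro k u
    have h2 : h • u = ∑ i, (h * u i) • e i := by
      conv_lhs => rw [hdecomp (h • u)]
      exact Finset.sum_congr rfl fun i _ => by rw [PiLp.smul_apply, smul_eq_mul]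
    calc iteratedFDeriv ℝ k g x (fun _ => h • u)
        = iteratedFDeriv ℝ k g x (fun _ => ∑ i, (h * u i) • e i) := by rw [← h2]
      _ = ∑ f : Fin k → Fin d,
            iteratedFDeriv ℝ k g x (fun j => (h * u (f j)) • e (f j)) :=
          (iteratedFDeriv ℝ k g x).map_sum (fun _ i => (h * u i) • e i)
      _ = _ := by
          refine Finset.sum_congr rfl fun f _ => ?_
          rw [(iteratedFDeriv ℝ k g x).map_smul_univ (fun j => h * u (f j))
            (fun j => e (f j)), smul_eq_mul, Finset.prod_mul_distrib,
            Finset.prod_const, Finset.card_univ, Fintype.card_fin]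
  -- monomial integrals vanish
  have hmono : ∀ k : ℕ, 1 ≤ k → k ≤ l - 1 → ∀ f : Fin k → Fin d,
      Integrable (fun u : EuclideanSpace ℝ (Fin d) => (∏ j, u (f j)) * K u) volume ∧
        ∫ u : EuclideanSpace ℝ (Fin d), (∏ j, u (f j)) * K u = 0 := by
    intro k hk1 hk2 f
    have hβ := hKmom (fun i => (Finset.univ.filter (fun j => f j = i)).card)
      (by rw [auxEcard f]; exact hk1) (by rw [auxEcard f]; exact hk2)
    have hfun : (fun u : EuclideanSpace ℝ (Fin d) => (∏ j, u (f j)) * K u)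
        = fun u : EuclideanSpace ℝ (Fin d) =>
            (∏ i, u i ^ (Finset.univ.filter (fun j => f j = i)).card) * K u := by
      funext u
      rw [auxE (fun i => u i) f]
    rw [hfun]
    exact hβ
  -- Taylor terms
  set T : ℕ → EuclideanSpace ℝ (Fin d) → ℝ := fun k u =>
    ((k.factorial : ℝ))⁻¹ * iteratedFDeriv ℝ k g x (fun _ => h • u) with hT
  set R : EuclideanSpace ℝ (Fin d) → ℝ := fun u =>
    g (x + h • u) - ∑ k ∈ Finset.range l, T k u with hR
  -- continuity of T k and R
  have hTcont : ∀ k, Continuous (T k) := by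
    intro k
    apply continuous_const.mul
    exact (iteratedFDeriv ℝ k g x).coe_continuous.comp
      (continuous_pi fun _ => continuous_id.const_smul h)
  have hRcont : Continuous R := by
    apply Continuous.sub
    · exact hg.continuous.comp (continuous_const.add (continuous_id.const_smul h))
    · exact continuous_finset_sum _ fun k _ => hTcont k
  -- the pointwise Taylor remainder bound
  have hRbd : ∀ u : EuclideanSpace ℝ (Fin d),
      |R u| ≤ M * h ^ l * ‖u‖ ^ l / (l.factorial) := by
    intro u
    have := auxD hl hg hgM x (h • u)
    have hnorm : ‖h • u‖ = h * ‖u‖ := by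
      rw [norm_smul, Real.norm_eq_abs, abs_of_pos hpos]
    rw [hnorm, mul_pow] at this
    calc |R u| ≤ M * (h ^ l * ‖u‖ ^ l) / (l.factorial) := this
      _ = M * h ^ l * ‖u‖ ^ l / (l.factorial) := by ring
  -- integrability of each K * T k
  have hTI : ∀ k ∈ Finset.range l, Integrable (fun u => K u * T k u) volume := by
    intro k hk
    rcases Nat.eq_zero_or_pos k with rfl | hk1
    · have : (fun u => K u * T 0 u) = fun u => K u * g x := by
        funext u
        simp [hT]
      rw [this]
      exact hKint.mul_const _
    · have hk2 : k ≤ l - 1 := by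
        have := Finset.mem_range.mp hk; omega
      have : (fun u => K u * T k u) = fun u => ∑ f : Fin k → Fin d,
          (((k.factorial : ℝ))⁻¹ * (h ^ k * iteratedFDeriv ℝ k g x (fun j => e (f j))))
            * ((∏ j, u (f j)) * K u) := by
        funext u
        rw [hT]
        simp only
        rw [hexp k u]
        simp only [Finset.mul_sum]
        exact Finset.sum_congr rfl fun f _ => by ring
      rw [this]
      exact integrable_finset_sum _ fun f _ => ((hmono k hk1 hk2 f).1.const_mul _)
  -- vanishing of integrals for k ≥ 1
  have hTI0 : ∀ k ∈ Finset.range l, k ≠ 0 → (∫ u, K u * T k u) = 0 := by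
    intro k hk hk0
    have hk1 : 1 ≤ k := Nat.one_le_iff_ne_zero.mpr hk0
    have hk2 : k ≤ l - 1 := by
      have := Finset.mem_range.mp hk; omega
    have hfun : (fun u => K u * T k u) = fun u => ∑ f : Fin k → Fin d,
        (((k.factorial : ℝ))⁻¹ * (h ^ k * iteratedFDeriv ℝ k g x (fun j => e (f j))))
          * ((∏ j, u (f j)) * K u) := by
      funext u
      rw [hT]
      simp only
      rw [hexp k u]
      simp only [Finset.mul_sum]
      exact Finset.sum_congr rfl fun f _ => by ring
    rw [hfun, integral_finset_sum _ fun f _ => ((hmono k hk1 hk2 f).1.const_mul _)]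
    refine Finset.sum_eq_zero fun f _ => ?_
    rw [integral_const_mul, (hmono k hk1 hk2 f).2, mul_zero]
  -- integral of K * T 0
  have hT0 : (∫ u, K u * T 0 u) = g x := by
    have : (fun u => K u * T 0 u) = fun u => K u * g x := by
      funext u; simp [hT]
    rw [this, integral_mul_const, hK1, one_mul]
  -- integrability of K * R
  have hRI : Integrable (fun u => K u * R u) volume := by
    refine Integrable.mono' ((hκ.const_mul (M * h ^ l / (l.factorial))))
      (hKint.aestronglyMeasurable.mul hRcont.aestronglyMeasurable)
      (Filter.Eventually.of_forall fun u => ?_)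
    rw [Real.norm_eq_abs, abs_mul]
    calc |K u| * |R u| ≤ |K u| * (M * h ^ l * ‖u‖ ^ l / (l.factorial)) :=
          mul_le_mul_of_nonneg_left (hRbd u) (abs_nonneg _)
      _ = M * h ^ l / (l.factorial) * (‖u‖ ^ l * |K u|) := by ring
  -- the splitting of the integrand
  have hsplit : (fun u : EuclideanSpace ℝ (Fin d) => K u * g (x + h • u))
      = fun u => (∑ k ∈ Finset.range l, K u * T k u) + K u * R u := by
    funext u
    rw [hR]
    simp only
    rw [mul_sub, ← Finset.mul_sum]
    ring
  -- compute the integral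
  have hint : (∫ u, K u * g (x + h • u))
      = (∑ k ∈ Finset.range l, ∫ u, K u * T k u) + ∫ u, K u * R u := by
    rw [hsplit, integral_add (integrable_finset_sum _ hTI) hRI,
      integral_finset_sum _ hTI]
  have hsum : (∑ k ∈ Finset.range l, ∫ u, K u * T k u) = g x := by
    rw [Finset.sum_eq_single_of_mem 0 (Finset.mem_range.mpr hl)
      (fun k hk hk0 => hTI0 k hk hk0)]
    exact hT0
  rw [hint, hsum, add_sub_cancel_left]
  -- final bound
  calc |∫ u, K u * R u| ≤ ∫ u, |K u * R u| := by simpa only [Real.norm_eq_abs] using norm_integral_le_integral_norm (μ := volume) fun u => K u * R u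
    _ ≤ ∫ u, M * h ^ l / (l.factorial) * (‖u‖ ^ l * |K u|) := by
        refine integral_mono_of_nonneg (Filter.Eventually.of_forall fun u => abs_nonneg _)
          (hκ.const_mul _) (Filter.Eventually.of_forall fun u => ?_)
        show |K u * R u| ≤ M * h ^ l / (l.factorial) * (‖u‖ ^ l * |K u|)
        rw [abs_mul]
        calc |K u| * |R u| ≤ |K u| * (M * h ^ l * ‖u‖ ^ l / (l.factorial)) :=
              mul_le_mul_of_nonneg_left (hRbd u) (abs_nonneg _)
          _ = M * h ^ l / (l.factorial) * (‖u‖ ^ l * |K u|) := by ring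
    _ = (M * (∫ u : EuclideanSpace ℝ (Fin d), ‖u‖ ^ l * |K u|) / (Nat.factorial l)) *
          h ^ l := by
        rw [integral_const_mul]
        ring
end
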